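/- Let u_t(b) = (V_t − b)·1{M_t ≤ b} where each pair (V_t, M_t), t = 1,…,T, is σ-smooth on [0,1]². Let X ⊆ [0,1] be a finite grid and δ(X) = max_{p∈[0,1]} min_{x∈X} |p−x|. Then sup_{b∈[0,1]} E[Σ_{t=1}^T u_t(b)] − max_{x∈X} E[Σ_{t=1}^T u_t(x)] ≤ 3·(δ(X)/σ)·T. -/

import Mathlib

/-!
Replace a bid `b` by a grid point `x` with `|b - x| ≤ δ`. In a round where the competing bid `M`
does not lie between `b` and `x`, the utility changes by at most `|b - x|`; otherwise it changes by
at most `1`. The event "`M` lies between `b` and `x`" means that `(V, M)` lies in the strip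
`[0,1] × (min b x, max b x]` of area `|b - x|`, so by σ-smoothness it has probability at most
`|b - x| / σ`. Since `(V, M)` lives in the unit square, smoothness also forces `σ ≤ 1`, hence each
round costs at most `2δ/σ` in expectation.
-/

open MeasureTheory Set

noncomputable def bidUtility (v m b : ℝ) : ℝ := (v - b) * (if m ≤ b then 1 else 0)

theorem abs_bidUtility_le_one {v m b : ℝ} (hv : v ∈ Icc (0 : ℝ) 1) (hb : b ∈ Icc (0 : ℝ) 1) :
    |bidUtility v m b| ≤ 1 := by
  obtain ⟨hv0, hv1⟩ := hv
  obtain ⟨hb0, hb1⟩ := hb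
  unfold bidUtility
  split_ifs
  · rw [mul_one, abs_le]
    constructor <;> linarith
  · simp

theorem bidUtility_sub_bidUtility_le {v m b x : ℝ} (hv : v ∈ Icc (0 : ℝ) 1)
    (hb : b ∈ Icc (0 : ℝ) 1) (hx : x ∈ Icc (0 : ℝ) 1) :
    bidUtility v m b - bidUtility v m x ≤ |b - x| + (Ioc (min b x) (max b x)).indicator 1 m := by
  obtain ⟨hv0, hv1⟩ := hv
  obtain ⟨hb0, hb1⟩ := hb
  obtain ⟨hx0, hx1⟩ := hx
  have hind : 0 ≤ (Ioc (min b x) (max b x)).indicator (1 : ℝ → ℝ) m :=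
    indicator_nonneg (fun _ _ => zero_le_one) m
  have habs : x - b ≤ |b - x| := by rw [abs_sub_comm]; exact le_abs_self _
  unfold bidUtility
  by_cases hmb : m ≤ b <;> by_cases hmx : m ≤ x
  · simp only [if_pos hmb, if_pos hmx]
    linarith
  · have hm : m ∈ Ioc (min b x) (max b x) :=
      ⟨(min_le_right b x).trans_lt (not_le.mp hmx), hmb.trans (le_max_left b x)⟩
    simp only [if_pos hmb, if_neg hmx, indicator_of_mem hm, Pi.one_apply]
    linarith [abs_nonneg (b - x)]
  · have hm : m ∈ Ioc (min b x) (max b x) :=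
      ⟨(min_le_left b x).trans_lt (not_le.mp hmb), hmx.trans (le_max_right b x)⟩
    simp only [if_neg hmb, if_pos hmx, indicator_of_mem hm, Pi.one_apply]
    linarith [abs_nonneg (b - x)]
  · simp only [if_neg hmb, if_neg hmx]
    linarith [abs_nonneg (b - x)]

section Measure

variable {Ω : Type*} [MeasurableSpace Ω]

noncomputable def expectedUtility (P : Measure Ω) (T : ℕ) (V M : ℕ → Ω → ℝ) (b : ℝ) : ℝ :=
  ∫ ω, ∑ t ∈ Finset.range T, bidUtility (V t ω) (M t ω) b ∂P

def IsSmooth (P : Measure Ω) (σ : ℝ) (Z : Ω → ℝ × ℝ) : Prop :=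
  ∀ A : Set (ℝ × ℝ), MeasurableSet A → P {ω | Z ω ∈ A} ≤ volume A / ENNReal.ofReal σ

variable {P : Measure Ω}

theorem integrable_bidUtility [IsFiniteMeasure P] {V M : Ω → ℝ} (hV : Measurable V)
    (hM : Measurable M) (hVr : ∀ ω, V ω ∈ Icc (0 : ℝ) 1) {b : ℝ} (hb : b ∈ Icc (0 : ℝ) 1) :
    Integrable (fun ω => bidUtility (V ω) (M ω) b) P := by
  have hmeas : Measurable fun ω => bidUtility (V ω) (M ω) b :=
    (hV.sub measurable_const).mul
      (Measurable.ite (measurableSet_le hM measurable_const) measurable_const measurable_const)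
  exact .of_bound hmeas.aestronglyMeasurable 1
    (.of_forall fun ω => abs_bidUtility_le_one (hVr ω) hb)

namespace IsSmooth

variable {σ : ℝ} {Z : Ω → ℝ × ℝ}

theorem le_one [IsProbabilityMeasure P] (h : IsSmooth P σ Z) (hσ : 0 < σ)
    (hZ : ∀ ω, Z ω ∈ Icc (0 : ℝ) 1 ×ˢ Icc (0 : ℝ) 1) : σ ≤ 1 := by
  have hsquare := h (Icc (0 : ℝ) 1 ×ˢ Icc (0 : ℝ) 1) (measurableSet_Icc.prod measurableSet_Icc)
  rw [show {ω | Z ω ∈ Icc (0 : ℝ) 1 ×ˢ Icc (0 : ℝ) 1} = univ from eq_univ_of_forall hZ,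
    measure_univ, Measure.volume_eq_prod, Measure.prod_prod, Real.volume_Icc, sub_zero,
    ENNReal.ofReal_one, one_mul,
    ENNReal.le_div_iff_mul_le (.inl (ENNReal.ofReal_pos.mpr hσ).ne') (.inl ENNReal.ofReal_ne_top),
    one_mul, ENNReal.ofReal_le_one] at hsquare
  exact hsquare

theorem measure_snd_mem_Ioc_le (h : IsSmooth P σ Z) (hσ : 0 < σ)
    (hZ : ∀ ω, (Z ω).1 ∈ Icc (0 : ℝ) 1) (a c : ℝ) :
    P {ω | (Z ω).2 ∈ Ioc a c} ≤ ENNReal.ofReal ((c - a) / σ) := by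
  have hstrip := h (Icc (0 : ℝ) 1 ×ˢ Ioc a c) (measurableSet_Icc.prod measurableSet_Ioc)
  rw [Measure.volume_eq_prod, Measure.prod_prod, Real.volume_Icc, Real.volume_Ioc, sub_zero,
    ENNReal.ofReal_one, one_mul, ← ENNReal.ofReal_div_of_pos hσ] at hstrip
  convert hstrip using 2
  ext ω
  exact (and_iff_right (hZ ω)).symm

end IsSmooth

variable [IsProbabilityMeasure P] {σ b x : ℝ}

theorem IsSmooth.integral_bidUtility_sub_le {V M : Ω → ℝ}
    (h : IsSmooth P σ fun ω => (V ω, M ω)) (hσ : 0 < σ) (hV : Measurable V) (hM : Measurable M)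
    (hVr : ∀ ω, V ω ∈ Icc (0 : ℝ) 1) (hMr : ∀ ω, M ω ∈ Icc (0 : ℝ) 1)
    (hb : b ∈ Icc (0 : ℝ) 1) (hx : x ∈ Icc (0 : ℝ) 1) :
    ∫ ω, bidUtility (V ω) (M ω) b ∂P - ∫ ω, bidUtility (V ω) (M ω) x ∂P ≤ 2 * |b - x| / σ := by
  set E := Ioc (min b x) (max b x)
  have hEmeas : MeasurableSet (M ⁻¹' E) := hM measurableSet_Ioc
  have hE : P.real (M ⁻¹' E) ≤ |b - x| / σ := by
    rw [← max_sub_min_eq_abs' b x]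
    exact ENNReal.toReal_le_of_le_ofReal (div_nonneg (sub_nonneg.mpr min_le_max) hσ.le)
      (h.measure_snd_mem_Ioc_le hσ hVr _ _)
  have hσ1 : σ ≤ 1 := h.le_one hσ fun ω => ⟨hVr ω, hMr ω⟩
  have hind : (fun ω => E.indicator 1 (M ω)) = (M ⁻¹' E).indicator (1 : Ω → ℝ) :=
    funext fun ω => (indicator_comp_right M (g := (1 : ℝ → ℝ))).symm
  have hind_int : Integrable (fun ω => E.indicator (1 : ℝ → ℝ) (M ω)) P := by
    rw [hind]
    exact (integrable_const 1).indicator hEmeas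
  calc ∫ ω, bidUtility (V ω) (M ω) b ∂P - ∫ ω, bidUtility (V ω) (M ω) x ∂P
      = ∫ ω, (bidUtility (V ω) (M ω) b - bidUtility (V ω) (M ω) x) ∂P :=
        (integral_sub (integrable_bidUtility hV hM hVr hb)
          (integrable_bidUtility hV hM hVr hx)).symm
    _ ≤ ∫ ω, (|b - x| + E.indicator 1 (M ω)) ∂P := by
        exact integral_mono ((integrable_bidUtility hV hM hVr hb).sub
          (integrable_bidUtility hV hM hVr hx)) ((integrable_const _).add hind_int)
          fun ω => bidUtility_sub_bidUtility_le (hVr ω) hb hx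
    _ = |b - x| + P.real (M ⁻¹' E) := by
        rw [integral_add (integrable_const _) hind_int, hind, integral_const,
          integral_indicator_one hEmeas, probReal_univ, one_smul]
    _ ≤ |b - x| / σ + |b - x| / σ := add_le_add (le_div_self (abs_nonneg _) hσ hσ1) hE
    _ = 2 * |b - x| / σ := by ring

theorem expectedUtility_sub_le (T : ℕ) {V M : ℕ → Ω → ℝ}
    (hsmooth : ∀ t ∈ Finset.range T, IsSmooth P σ fun ω => (V t ω, M t ω)) (hσ : 0 < σ)
    (hV : ∀ t, Measurable (V t)) (hM : ∀ t, Measurable (M t))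
    (hVr : ∀ t ω, V t ω ∈ Icc (0 : ℝ) 1) (hMr : ∀ t ω, M t ω ∈ Icc (0 : ℝ) 1)
    (hb : b ∈ Icc (0 : ℝ) 1) (hx : x ∈ Icc (0 : ℝ) 1) :
    expectedUtility P T V M b - expectedUtility P T V M x ≤ 2 * |b - x| / σ * T := by
  unfold expectedUtility
  rw [integral_finsetSum _ fun t _ => integrable_bidUtility (hV t) (hM t) (hVr t) hb,
    integral_finsetSum _ fun t _ => integrable_bidUtility (hV t) (hM t) (hVr t) hx,
    ← Finset.sum_sub_distrib]
  calc _ ≤ (Finset.range T).card • (2 * |b - x| / σ) :=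
        Finset.sum_le_card_nsmul _ _ _ fun t ht =>
          (hsmooth t ht).integral_bidUtility_sub_le hσ (hV t) (hM t) (hVr t) (hMr t) hb hx
    _ = 2 * |b - x| / σ * T := by rw [Finset.card_range, nsmul_eq_mul, mul_comm]

end Measure

/-- Discretization Lemma for σ-smooth adversaries. -/
theorem stmt_1 {Ω : Type*} [MeasurableSpace Ω] {P : MeasureTheory.Measure Ω}
    [IsProbabilityMeasure P]
    (T : ℕ) (V M : ℕ → Ω → ℝ)
    (hV : ∀ t, Measurable (V t)) (hM : ∀ t, Measurable (M t))
    (hVr : ∀ t ω, V t ω ∈ Set.Icc (0:ℝ) 1) (hMr : ∀ t ω, M t ω ∈ Set.Icc (0:ℝ) 1)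
    (σ : ℝ) (hσ : 0 < σ)
    (hsmooth : ∀ t ∈ Finset.range T, ∀ A : Set (ℝ × ℝ), MeasurableSet A →
      P {ω | (V t ω, M t ω) ∈ A} ≤ volume A / ENNReal.ofReal σ)
    (X : Finset ℝ) (hXne : X.Nonempty) (hX : ∀ x ∈ X, x ∈ Set.Icc (0:ℝ) 1)
    (δ : ℝ)
    (hδ : ∀ p ∈ Set.Icc (0:ℝ) 1, ∃ x ∈ X, |p - x| ≤ δ) :
    sSup { r : ℝ | ∃ b ∈ Set.Icc (0:ℝ) 1,
        r = ∫ ω, (∑ t ∈ Finset.range T, (V t ω - b) * (if M t ω ≤ b then 1 else 0)) ∂P }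
      - X.sup' hXne (fun x =>
          ∫ ω, (∑ t ∈ Finset.range T, (V t ω - x) * (if M t ω ≤ x then 1 else 0)) ∂P)
      ≤ 3 * (δ / σ) * T := by
  change sSup {r | ∃ b ∈ Icc (0 : ℝ) 1, r = expectedUtility P T V M b}
    - X.sup' hXne (expectedUtility P T V M) ≤ _
  obtain ⟨x₀, -, hx₀⟩ := hδ 0 ⟨le_rfl, zero_le_one⟩
  have hδ0 : 0 ≤ δ := (abs_nonneg _).trans hx₀
  rw [sub_le_iff_le_add']
  refine csSup_le ⟨_, 0, ⟨le_rfl, zero_le_one⟩, rfl⟩ ?_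
  rintro _ ⟨b, hb, rfl⟩
  obtain ⟨x, hxX, hbx⟩ := hδ b hb
  have hloss := expectedUtility_sub_le T hsmooth hσ hV hM hVr hMr hb (hX x hxX)
  have hgrid := X.le_sup' (expectedUtility P T V M) hxX
  have hslack : 2 * |b - x| / σ * T ≤ 3 * (δ / σ) * T := by
    rw [mul_div_assoc]
    gcongr
    linarith
  linarith
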